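/- arXiv:2504.14407 — 4 statements merged into one kernel-verified Lean document; each statement's English description precedes it below -/
import Mathlib

section
/- Let H be a real inner product space and let u, y ∈ H be nonzero vectors satisfying ⟨u, y⟩ ≥ δ‖u‖² + ε‖y‖² with δ, ε > 0 and 4δε ≤ 1. Define the complex number z = (‖y‖/‖u‖)·exp(i·arccos(⟨u,y⟩/(‖u‖‖y‖))). Then Re(z) ≥ δ, |z| ≤ 1/ε, and |arg z| ≤ arccos(2√(δε)). -/
/-! The SRG point of `(u, y)` has real part `⟪u, y⟫ / ‖u‖²`, modulus `‖y‖ / ‖u‖` and argument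
`angle u y`. The real-part bound drops `ε ‖y‖²` from the hypothesis; the gain bound combines
`ε ‖y‖² ≤ ⟪u, y⟫ ≤ ‖u‖ ‖y‖`; the sector bound is AM-GM,
`δ ‖u‖² + ε ‖y‖² ≥ 2 √(δε) ‖u‖ ‖y‖`, read through the antitone `arccos`. -/

open RealInnerProductSpace InnerProductGeometry Complex

theorem two_mul_sqrt_mul_mul_le_add {δ ε : ℝ} (hδ : 0 ≤ δ) (hε : 0 ≤ ε) (a b : ℝ) :
    2 * √(δ * ε) * a * b ≤ δ * a ^ 2 + ε * b ^ 2 := by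
  have := two_mul_le_add_sq (√δ * a) (√ε * b)
  rw [Real.sqrt_mul hδ]
  rw [mul_pow, mul_pow, Real.sq_sqrt hδ, Real.sq_sqrt hε] at this
  linarith

section InnerProduct

variable {H : Type*} [NormedAddCommGroup H] [InnerProductSpace ℝ H] {u y : H} {δ ε : ℝ}

theorem mul_norm_le_norm_of_add_le_inner (hδ : 0 ≤ δ)
    (h : δ * ‖u‖ ^ 2 + ε * ‖y‖ ^ 2 ≤ ⟪u, y⟫) : ε * ‖y‖ ≤ ‖u‖ := by
  rcases (norm_nonneg y).eq_or_lt with hy | hy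
  · rw [← hy, mul_zero]
    exact norm_nonneg u
  · have : ε * ‖y‖ * ‖y‖ ≤ ‖u‖ * ‖y‖ := by
      nlinarith [real_inner_le_norm u y, sq_nonneg ‖u‖]
    exact le_of_mul_le_mul_right this hy

theorem two_sqrt_mul_le_inner_div_of_add_le_inner (hu : u ≠ 0) (hy : y ≠ 0)
    (hδ : 0 ≤ δ) (hε : 0 ≤ ε) (h : δ * ‖u‖ ^ 2 + ε * ‖y‖ ^ 2 ≤ ⟪u, y⟫) :
    2 * √(δ * ε) ≤ ⟪u, y⟫ / (‖u‖ * ‖y‖) := by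
  rw [le_div_iff₀ (by positivity), ← mul_assoc]
  exact (two_mul_sqrt_mul_mul_le_add hδ hε _ _).trans h

theorem angle_le_arccos_two_sqrt_mul_of_add_le_inner (hu : u ≠ 0) (hy : y ≠ 0)
    (hδ : 0 ≤ δ) (hε : 0 ≤ ε) (h : δ * ‖u‖ ^ 2 + ε * ‖y‖ ^ 2 ≤ ⟪u, y⟫) :
    angle u y ≤ Real.arccos (2 * √(δ * ε)) :=
  Real.arccos_le_arccos (two_sqrt_mul_le_inner_div_of_add_le_inner hu hy hδ hε h)

noncomputable def srgPoint (u y : H) : ℂ :=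
  (‖y‖ / ‖u‖ : ℝ) * exp (I * (angle u y : ℝ))

theorem srgPoint_re (u y : H) : (srgPoint u y).re = ⟪u, y⟫ / ‖u‖ ^ 2 := by
  rw [srgPoint, mul_comm I, re_ofReal_mul, exp_ofReal_mul_I_re, ← cos_angle_mul_norm_mul_norm]
  rcases eq_or_ne ‖u‖ 0 with hu | hu
  · simp [hu]
  · field_simp

theorem norm_srgPoint (u y : H) : ‖srgPoint u y‖ = ‖y‖ / ‖u‖ := by
  rw [srgPoint, norm_mul, mul_comm I, norm_exp_ofReal_mul_I, mul_one, norm_real,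
    Real.norm_of_nonneg (by positivity)]

theorem arg_srgPoint (hu : u ≠ 0) (hy : y ≠ 0) : (srgPoint u y).arg = angle u y := by
  rw [srgPoint, arg_real_mul _ (by positivity), mul_comm I, exp_mul_I, arg_cos_add_sin_mul_I]
  exact ⟨(neg_neg_of_pos Real.pi_pos).trans_le (angle_nonneg u y), angle_le_pi u y⟩

end InnerProduct

theorem srg_point_in_truncated_disk_sector_general {H : Type*} [NormedAddCommGroup H]
    [InnerProductSpace ℝ H] (u y : H) (hu : u ≠ 0) (hy : y ≠ 0)
    (δ ε : ℝ) (hδ : 0 < δ) (hε : 0 < ε)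
    (h : ⟪u, y⟫ ≥ δ * ‖u‖ ^ 2 + ε * ‖y‖ ^ 2)
    (z : ℂ)
    (hz : z = (‖y‖ / ‖u‖ : ℝ) *
      Complex.exp (Complex.I * (Real.arccos (⟪u, y⟫ / (‖u‖ * ‖y‖)) : ℝ))) :
    z.re ≥ δ ∧ ‖z‖ ≤ 1 / ε ∧
      |z.arg| ≤ Real.arccos (2 * Real.sqrt (δ * ε)) := by
  -- `angle u y` unfolds to the `arccos` in `hz`
  have hz : z = srgPoint u y := hz
  subst hz
  have hu' : 0 < ‖u‖ := norm_pos_iff.mpr hu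
  refine ⟨?_, ?_, ?_⟩
  · rw [srgPoint_re, ge_iff_le, le_div_iff₀ (by positivity)]
    nlinarith [mul_nonneg hε.le (sq_nonneg ‖y‖)]
  · rw [norm_srgPoint, div_le_div_iff₀ hu' hε, one_mul, mul_comm]
    exact mul_norm_le_norm_of_add_le_inner hδ.le h
  · rw [arg_srgPoint hu hy, abs_of_nonneg (angle_nonneg u y)]
    exact angle_le_arccos_two_sqrt_mul_of_add_le_inner hu hy hδ.le hε.le h

theorem srg_point_in_truncated_disk_sector {H : Type*} [NormedAddCommGroup H]
    [InnerProductSpace ℝ H] (u y : H) (hu : u ≠ 0) (hy : y ≠ 0)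
    (δ ε : ℝ) (hδ : 0 < δ) (hε : 0 < ε) (hδε : 4 * δ * ε ≤ 1)
    (h : ⟪u, y⟫ ≥ δ * ‖u‖ ^ 2 + ε * ‖y‖ ^ 2)
    (z : ℂ)
    (hz : z = (‖y‖ / ‖u‖ : ℝ) *
      Complex.exp (Complex.I * (Real.arccos (⟪u, y⟫ / (‖u‖ * ‖y‖)) : ℝ))) :
    z.re ≥ δ ∧ ‖z‖ ≤ 1 / ε ∧
      |z.arg| ≤ Real.arccos (2 * Real.sqrt (δ * ε)) :=
  srg_point_in_truncated_disk_sector_general u y hu hy δ ε hδ hε h z hz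
end

section
/- Let H be a real inner product space, and let d, u₁, u₂, y₂ ∈ H with u₁ = d + y₂, u₁ ≠ 0, u₂ ≠ 0, y₂ ≠ 0. If ⟨u₁, u₂⟩/(‖u₁‖·‖u₂‖) − ⟨y₂, u₂⟩/(‖y₂‖·‖u₂‖) ≥ ε̄ for some ε̄ > 0, then ‖u₁‖ ≤ (2/ε̄)·‖d‖. -/
open RealInnerProductSpace InnerProductGeometry Real

theorem cos_angle_sub_cos_angle_mul_norm_le {V : Type*} [NormedAddCommGroup V]
    [InnerProductSpace ℝ V] (x y z : V) :
    (cos (angle x z) - cos (angle y z)) * ‖x‖ ≤ 2 * ‖x - y‖ := by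
  rcases eq_or_ne z 0 with rfl | hz
  · simp only [angle_zero_right, cos_pi_div_two, sub_self, zero_mul]
    positivity
  have hcos_mul_le : cos (angle y z) * (‖y‖ - ‖x‖) ≤ ‖x - y‖ :=
    calc cos (angle y z) * (‖y‖ - ‖x‖)
        ≤ |cos (angle y z)| * |‖y‖ - ‖x‖| := (le_abs_self _).trans (abs_mul _ _).le
      _ ≤ 1 * ‖y - x‖ := by gcongr; exacts [abs_cos_le_one _, abs_norm_sub_norm_le y x]
      _ = ‖x - y‖ := by rw [one_mul, norm_sub_rev]
  refine le_of_mul_le_mul_right ?_ (norm_pos_iff.2 hz)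
  -- Splitting `x = (x - y) + y` turns the left side into an inner product plus a norm defect.
  calc (cos (angle x z) - cos (angle y z)) * ‖x‖ * ‖z‖
      = ⟪x - y, z⟫ + cos (angle y z) * (‖y‖ - ‖x‖) * ‖z‖ := by
        rw [inner_sub_left, ← cos_angle_mul_norm_mul_norm x z, ← cos_angle_mul_norm_mul_norm y z]
        ring
    _ ≤ ‖x - y‖ * ‖z‖ + ‖x - y‖ * ‖z‖ := by
        gcongr
        exact real_inner_le_norm _ _
    _ = 2 * ‖x - y‖ * ‖z‖ := by ring

theorem small_phase_feedback_estimate_general {H : Type*} [NormedAddCommGroup H]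
    [InnerProductSpace ℝ H] (d u₁ u₂ y₂ : H)
    (hfb : u₁ = d + y₂)
    (ε : ℝ) (hε : 0 < ε)
    (h : ⟪u₁, u₂⟫ / (‖u₁‖ * ‖u₂‖) - ⟪y₂, u₂⟫ / (‖y₂‖ * ‖u₂‖) ≥ ε) :
    ‖u₁‖ ≤ (2 / ε) * ‖d‖ := by
  rw [← cos_angle, ← cos_angle] at h
  have hd : d = u₁ - y₂ := eq_sub_of_add_eq hfb.symm
  have key : ε * ‖u₁‖ ≤ 2 * ‖d‖ :=
    calc ε * ‖u₁‖ ≤ (cos (angle u₁ u₂) - cos (angle y₂ u₂)) * ‖u₁‖ := by gcongr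
      _ ≤ 2 * ‖d‖ := hd ▸ cos_angle_sub_cos_angle_mul_norm_le u₁ y₂ u₂
  rw [div_mul_eq_mul_div, le_div_iff₀ hε]
  linarith

theorem small_phase_feedback_estimate {H : Type*} [NormedAddCommGroup H]
    [InnerProductSpace ℝ H] (d u₁ u₂ y₂ : H)
    (hfb : u₁ = d + y₂) (hu₁ : u₁ ≠ 0) (hu₂ : u₂ ≠ 0) (hy₂ : y₂ ≠ 0)
    (ε : ℝ) (hε : 0 < ε)
    (h : ⟪u₁, u₂⟫ / (‖u₁‖ * ‖u₂‖) - ⟪y₂, u₂⟫ / (‖y₂‖ * ‖u₂‖) ≥ ε) :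
    ‖u₁‖ ≤ (2 / ε) * ‖d‖ :=
  small_phase_feedback_estimate_general d u₁ u₂ y₂ hfb ε hε h
end

section
/- Let H be a real inner product space, d, u₁, u₂, y₂ ∈ H with u₁ = d + y₂, u₁ ≠ 0, u₂ ≠ 0, y₂ ≠ 0. If ⟨y₂, u₂⟩/(‖y₂‖·‖u₂‖) − ⟨u₁, u₂⟩/(‖u₁‖·‖u₂‖) ≥ ε̃ for some ε̃ > 0, then ‖u₁‖ ≤ (2/ε̃)·‖d‖. -/
/-!
Normalize `u₁`, `y₂`, `u₂`. The hypothesis says that the inner product of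
`normalize y₂ - normalize u₁` with the unit vector `normalize u₂` is at least `ε`, so by
Cauchy–Schwarz the two directions are at distance at least `ε`. On the other hand, rescaling
`normalize y₂` to length `‖u₁‖` moves it by `|‖u₁‖ - ‖y₂‖| ≤ ‖d‖` (reverse triangle inequality),
so `‖u₁‖ * ‖normalize u₁ - normalize y₂‖ ≤ 2 * ‖u₁ - y₂‖ = 2 * ‖d‖`.
-/

open RealInnerProductSpace

namespace NormedSpace

section Normed

variable {V : Type*} [NormedAddCommGroup V] [NormedSpace ℝ V]

theorem norm_normalize_le_one (x : V) : ‖normalize x‖ ≤ 1 := by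
  by_cases hx : x = 0
  · simp [hx]
  · exact (norm_normalize hx).le

theorem norm_norm_smul_normalize_sub_le (x y : V) : ‖‖x‖ • normalize y - y‖ ≤ ‖x - y‖ :=
  calc ‖‖x‖ • normalize y - y‖ = ‖(‖x‖ - ‖y‖) • normalize y‖ := by
        rw [sub_smul, norm_smul_normalize]
    _ = |‖x‖ - ‖y‖| * ‖normalize y‖ := by rw [norm_smul, Real.norm_eq_abs]
    _ ≤ |‖x‖ - ‖y‖| * 1 := by gcongr; exact norm_normalize_le_one y
    _ ≤ ‖x - y‖ := by rw [mul_one]; exact abs_norm_sub_norm_le x y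

theorem norm_mul_norm_normalize_sub_normalize_le (x y : V) :
    ‖x‖ * ‖normalize x - normalize y‖ ≤ 2 * ‖x - y‖ :=
  calc ‖x‖ * ‖normalize x - normalize y‖ = ‖x - ‖x‖ • normalize y‖ := by
        rw [← norm_smul_of_nonneg (norm_nonneg x), smul_sub, norm_smul_normalize]
    _ ≤ ‖x - y‖ + ‖y - ‖x‖ • normalize y‖ := norm_sub_le_norm_sub_add_norm_sub _ _ _
    _ ≤ ‖x - y‖ + ‖x - y‖ := by
        rw [norm_sub_rev y]; gcongr; exact norm_norm_smul_normalize_sub_le x y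
    _ = 2 * ‖x - y‖ := by ring

end Normed

section InnerProduct

variable {H : Type*} [NormedAddCommGroup H] [InnerProductSpace ℝ H]

theorem real_inner_normalize_normalize (x y : H) :
    ⟪normalize x, normalize y⟫ = ⟪x, y⟫ / (‖x‖ * ‖y‖) := by
  rw [normalize, normalize, real_inner_smul_left, real_inner_smul_right, div_eq_inv_mul,
    mul_inv]
  ring

theorem inner_div_norm_mul_norm_sub_le_norm_normalize_sub (x y z : H) :
    ⟪x, z⟫ / (‖x‖ * ‖z‖) - ⟪y, z⟫ / (‖y‖ * ‖z‖) ≤ ‖normalize x - normalize y‖ :=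
  calc ⟪x, z⟫ / (‖x‖ * ‖z‖) - ⟪y, z⟫ / (‖y‖ * ‖z‖)
        = ⟪normalize x - normalize y, normalize z⟫ := by
        rw [inner_sub_left, real_inner_normalize_normalize, real_inner_normalize_normalize]
    _ ≤ ‖normalize x - normalize y‖ * ‖normalize z‖ := real_inner_le_norm _ _
    _ ≤ ‖normalize x - normalize y‖ := mul_le_of_le_one_right (norm_nonneg _)
        (norm_normalize_le_one z)

end InnerProduct

end NormedSpace

open NormedSpace

theorem small_phase_feedback_estimate_symm_general {H : Type*} [NormedAddCommGroup H]
    [InnerProductSpace ℝ H] (d u₁ u₂ y₂ : H)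
    (hfb : u₁ = d + y₂)
    (ε : ℝ) (hε : 0 < ε)
    (h : ⟪y₂, u₂⟫ / (‖y₂‖ * ‖u₂‖) - ⟪u₁, u₂⟫ / (‖u₁‖ * ‖u₂‖) ≥ ε) :
    ‖u₁‖ ≤ (2 / ε) * ‖d‖ := by
  have hd : d = u₁ - y₂ := by rw [hfb, add_sub_cancel_right]
  have hsep : ε ≤ ‖normalize u₁ - normalize y₂‖ := by
    rw [norm_sub_rev]
    exact h.le.trans (inner_div_norm_mul_norm_sub_le_norm_normalize_sub y₂ u₁ u₂)
  have hbound : ε * ‖u₁‖ ≤ 2 * ‖d‖ :=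
    calc ε * ‖u₁‖ ≤ ‖u₁‖ * ‖normalize u₁ - normalize y₂‖ := by
          rw [mul_comm]; gcongr
      _ ≤ 2 * ‖d‖ := hd ▸ norm_mul_norm_normalize_sub_normalize_le u₁ y₂
  rw [div_mul_eq_mul_div, le_div_iff₀ hε, mul_comm]
  exact hbound

theorem small_phase_feedback_estimate_symm {H : Type*} [NormedAddCommGroup H]
    [InnerProductSpace ℝ H] (d u₁ u₂ y₂ : H)
    (hfb : u₁ = d + y₂) (hu₁ : u₁ ≠ 0) (hu₂ : u₂ ≠ 0) (hy₂ : y₂ ≠ 0)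
    (ε : ℝ) (hε : 0 < ε)
    (h : ⟪y₂, u₂⟫ / (‖y₂‖ * ‖u₂‖) - ⟪u₁, u₂⟫ / (‖u₁‖ * ‖u₂‖) ≥ ε) :
    ‖u₁‖ ≤ (2 / ε) * ‖d‖ :=
  small_phase_feedback_estimate_symm_general d u₁ u₂ y₂ hfb ε hε h
end

section
/- Let H be a real inner product space and u₁, y₁, u₂, y₂, d ∈ H satisfy the negative feedback relations u₁ = d − y₂ and u₂ = y₁. Suppose ⟨u₁, y₁⟩ ≥ δ‖u₁‖² + ε‖y₁‖² with δ, ε > 0 (strict passivity of the forward component) and ⟨u₂, y₂⟩ ≥ 0 (passivity of the return component). Then ‖y₁‖ ≤ ‖d‖/ε and ‖u₁‖ ≤ ‖d‖/√(δε). -/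
open RealInnerProductSpace

lemma inner_le_inner_of_negative_feedback {H : Type*} [NormedAddCommGroup H]
    [InnerProductSpace ℝ H] {u₁ y₁ y₂ d : H} (hfb : u₁ = d - y₂) (hpassive : 0 ≤ ⟪y₂, y₁⟫) :
    ⟪u₁, y₁⟫ ≤ ⟪d, y₁⟫ := by
  rw [hfb, inner_sub_left]
  linarith

lemma le_div_of_mul_sq_le_mul {b c ε : ℝ} (hε : 0 < ε) (hb : 0 ≤ b) (hc : 0 ≤ c)
    (h : ε * b ^ 2 ≤ c * b) : b ≤ c / ε := by
  rcases hb.eq_or_lt with rfl | hb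
  · positivity
  · rw [le_div_iff₀ hε]
    nlinarith

lemma le_div_sqrt_mul_of_mul_sq_le {a b c δ ε : ℝ} (hδ : 0 < δ) (hε : 0 < ε) (hc : 0 ≤ c)
    (h : δ * a ^ 2 ≤ c * b) (hb : b ≤ c / ε) : a ≤ c / √(δ * ε) := by
  have hsq : a ^ 2 ≤ (c / √(δ * ε)) ^ 2 := by
    rw [div_pow, Real.sq_sqrt (by positivity), le_div_iff₀ (by positivity)]
    calc a ^ 2 * (δ * ε) = δ * a ^ 2 * ε := by ring
      _ ≤ c * (c / ε) * ε := by
        gcongr ?_ * ε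
        exact h.trans (mul_le_mul_of_nonneg_left hb hc)
      _ = c ^ 2 := by field_simp
  exact abs_le_of_sq_le_sq' hsq (by positivity) |>.2

theorem incremental_passivity_feedback_bound {H : Type*} [NormedAddCommGroup H]
    [InnerProductSpace ℝ H] (u₁ y₁ u₂ y₂ d : H)
    (hfb1 : u₁ = d - y₂) (hfb2 : u₂ = y₁)
    (δ ε : ℝ) (hδ : 0 < δ) (hε : 0 < ε)
    (hstrict : ⟪u₁, y₁⟫ ≥ δ * ‖u₁‖ ^ 2 + ε * ‖y₁‖ ^ 2)
    (hpassive : ⟪u₂, y₂⟫ ≥ 0) :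
    ‖y₁‖ ≤ ‖d‖ / ε ∧ ‖u₁‖ ≤ ‖d‖ / Real.sqrt (δ * ε) := by
  rw [hfb2, real_inner_comm] at hpassive
  have hdissipation : δ * ‖u₁‖ ^ 2 + ε * ‖y₁‖ ^ 2 ≤ ‖d‖ * ‖y₁‖ := calc
    _ ≤ ⟪u₁, y₁⟫ := hstrict
    _ ≤ ⟪d, y₁⟫ := inner_le_inner_of_negative_feedback hfb1 hpassive
    _ ≤ ‖d‖ * ‖y₁‖ := real_inner_le_norm d y₁
  have hy : ‖y₁‖ ≤ ‖d‖ / ε :=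
    le_div_of_mul_sq_le_mul hε (norm_nonneg _) (norm_nonneg _) (by linarith [mul_nonneg hδ.le (sq_nonneg ‖u₁‖)])
  exact ⟨hy, le_div_sqrt_mul_of_mul_sq_le hδ hε (norm_nonneg _) 
      (by linarith [mul_nonneg hε.le (sq_nonneg ‖y₁‖)]) hy⟩
end
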